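/- Let (f_i)_{i∈I} be an LK-family and ψ : B⁺ → End(V) the associated LK-representation. Assume: (i) the image of ψ is a left cancellative submonoid of End(V); and (ii) there exist a totally ordered commutative ring 𝔯₀ and a ring homomorphism 𝔯 → 𝔯₀, x ↦ x̄, such that 𝔞̄, 𝔟̄, 𝔠̄, 𝔡̄ are all positive and the image of f_i(e_α) is 0 for every (i,α) ∈ I×Φ⁺. Then ψ is injective. -/

import Mathlib

set_option maxRecDepth 4000

namespace LK

/-! ### Coxeter matrices -/

/-- A Coxeter matrix on an index set `I` (entry `0` encodes `∞`). -/
structure CoxM (I : Type) where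
  m : I → I → ℕ
  symm : ∀ i j, m i j = m j i
  one_iff : ∀ i j, m i j = 1 ↔ i = j

variable {I : Type}

/-- A Coxeter matrix is of small type if all its entries belong to `{1,2,3}`. -/
def CoxM.Small (M : CoxM I) : Prop := ∀ i j, M.m i j = 1 ∨ M.m i j = 2 ∨ M.m i j = 3

/-- The alternating word `i j i j ⋯` with `k` letters. -/
def braidList (k : ℕ) (i j : I) : List I :=
  (List.range k).map (fun n => if n % 2 = 0 then i else j)

/-- The braid word `s_i s_j s_i ⋯` (`k` letters) in the free monoid. -/
def braidWord (k : ℕ) (i j : I) : FreeMonoid I := FreeMonoid.ofList (braidList k i j)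

/-- The braid relations defining the Artin–Tits monoid. -/
def artinRel (M : CoxM I) : FreeMonoid I → FreeMonoid I → Prop :=
  fun x y => ∃ i j, M.m i j ≠ 0 ∧ x = braidWord (M.m i j) i j ∧ y = braidWord (M.m i j) j i

/-- The congruence on the free monoid generated by the braid relations. -/
def artinCon (M : CoxM I) : Con (FreeMonoid I) := conGen (artinRel M)

/-- The Artin–Tits monoid `B⁺` of a Coxeter matrix. -/
def AM (M : CoxM I) := (artinCon M).Quotient

instance (M : CoxM I) : Monoid (AM M) := inferInstanceAs (Monoid (artinCon M).Quotient)

/-- The standard generators of the Artin–Tits monoid. -/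
def gen (M : CoxM I) (i : I) : AM M := (artinCon M).mk' (FreeMonoid.of i)

/-- `I(b) = {i ∈ I ∣ s_i ≼ b}`, where `≼` is left divisibility. -/
def IdxSet (M : CoxM I) (x : AM M) : Set I := {i | gen M i ∣ x}

/-- The braid word `s_i s_j s_i ⋯` (`k` letters) in the free group. -/
def braidWordG (k : ℕ) (i j : I) : FreeGroup I := ((braidList k i j).map FreeGroup.of).prod

/-- The braid relators defining the Artin–Tits group. -/
def artinGRels (M : CoxM I) : Set (FreeGroup I) :=
  {r | ∃ i j, M.m i j ≠ 0 ∧ r = braidWordG (M.m i j) i j * (braidWordG (M.m i j) j i)⁻¹}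

/-- The Artin–Tits group `B` of a Coxeter matrix. -/
def AG (M : CoxM I) := PresentedGroup (artinGRels M)

instance (M : CoxM I) : Group (AG M) := inferInstanceAs (Group (PresentedGroup _))

/-- The standard generators of the Artin–Tits group. -/
def ggen (M : CoxM I) (i : I) : AG M := PresentedGroup.of i

/-- The relators defining the Coxeter group. -/
def coxRels (M : CoxM I) : Set (FreeGroup I) :=
  {r | ∃ i j, M.m i j ≠ 0 ∧ r = (FreeGroup.of i * FreeGroup.of j) ^ (M.m i j)}

/-- The Coxeter group `W` of a Coxeter matrix. -/
def CoxG (M : CoxM I) := PresentedGroup (coxRels M)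

instance (M : CoxM I) : Group (CoxG M) := inferInstanceAs (Group (PresentedGroup _))

/-- A Coxeter matrix is spherical if its Coxeter group is finite. -/
def Spherical (M : CoxM I) : Prop := Finite (CoxG M)

/-- Connectedness of the Coxeter graph: there is an edge between `i` and `j`
iff `m i j ∉ {1,2}`. -/
def Connected (M : CoxM I) : Prop :=
  ∀ i j : I, Relation.ReflTransGen (fun a b => M.m a b ≠ 1 ∧ M.m a b ≠ 2) i j

/-- Restriction of a Coxeter matrix to a subset of the index set. -/
def CoxM.restrictF [DecidableEq I] (M : CoxM I) (J : Finset I) : CoxM {i // i ∈ J} :=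
  ⟨fun i j => M.m i j, fun i j => M.symm i j,
   fun i j => (M.one_iff i j).trans (by exact Subtype.coe_inj)⟩

/-- An irreducible affine Coxeter matrix: connected, non-spherical, but every proper
parabolic submatrix is spherical. -/
def Affine [Fintype I] [DecidableEq I] (M : CoxM I) : Prop :=
  Connected M ∧ ¬ Spherical M ∧ ∀ J : Finset I, J ≠ Finset.univ → Spherical (M.restrictF J)

/-! ### The standard root system -/

section Roots

variable [Fintype I] [DecidableEq I]

/-- The coefficients `-2 cos (π / m i j)` of the standard bilinear form. -/
noncomputable def cf (M : CoxM I) (i j : I) : ℝ := -2 * Real.cos (Real.pi / (M.m i j : ℝ))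

/-- The standard symmetric bilinear form `( · | · )` on `E = ⊕ ℝ α_i`. -/
noncomputable def bform (M : CoxM I) (x y : I → ℝ) : ℝ := ∑ i, ∑ j, x i * y j * cf M i j

/-- The simple root `α_i`. -/
def sroot (i : I) : I → ℝ := Pi.single i 1

/-- The simple reflection `s_i` acting on `E`. -/
noncomputable def srefl (M : CoxM I) (i : I) (v : I → ℝ) : I → ℝ :=
  v - bform M v (sroot i) • sroot i

/-- The roots: the orbit of the simple roots under the reflections. -/
inductive IsRoot (M : CoxM I) : (I → ℝ) → Prop
  | simple (i : I) : IsRoot M (sroot i)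
  | srefl (i : I) (v : I → ℝ) : IsRoot M v → IsRoot M (LK.srefl M i v)

/-- The positive roots: roots with nonnegative coordinates. -/
def IsPos (M : CoxM I) (v : I → ℝ) : Prop := IsRoot M v ∧ ∀ i, 0 ≤ v i

/-- The set `Φ⁺` of positive roots, as a type. -/
def Pos (M : CoxM I) := {v : I → ℝ // IsPos M v}

/-- The depth of a positive root: the least number of simple reflections needed to
send it to a negative vector. -/
noncomputable def dep (M : CoxM I) (v : I → ℝ) : ℕ :=
  sInf {n | ∃ l : List I, l.length = n ∧ ∃ k, l.foldr (srefl M) v k < 0}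

theorem isPos_sroot (M : CoxM I) (i : I) : IsPos M (sroot i) :=
  ⟨IsRoot.simple i, fun j => by rw [sroot, Pi.single_apply]; split <;> norm_num⟩

/-- The simple root `α_i` as a positive root. -/
def simplePos (M : CoxM I) (i : I) : Pos M := ⟨sroot i, isPos_sroot M i⟩

/-! ### The Lawrence–Krammer representation -/

variable (M : CoxM I) (R : Type) [CommRing R]

/-- The free module `V` with basis `(e_α)` indexed by the positive roots. -/
abbrev VV := Pos M →₀ R

/-- The basis vector `e_α` of `V`. -/
noncomputable def ev (α : Pos M) : VV M R := Finsupp.single α 1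

open scoped Classical in
/-- The value of the map `φ_i` on the basis vector indexed by `α`. -/
noncomputable def phiAux (a b c d : R) (i : I) (α : Pos M) : VV M R :=
  if α.1 = sroot i then 0
  else if srefl M i α.1 = α.1 then d • ev M R α
  else if h : IsPos M (srefl M i α.1) then
    if dep M α.1 < dep M (srefl M i α.1) then
      a • ev M R α + c • ev M R ⟨srefl M i α.1, h⟩
    else b • ev M R ⟨srefl M i α.1, h⟩
  else 0

/-- The linear map `φ_i : V → V`. -/
noncomputable def phi (a b c d : R) (i : I) : VV M R →ₗ[R] VV M R :=
  Finsupp.lift (VV M R) R (Pos M) (phiAux M R a b c d i)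

/-- The linear map `ψ_i = φ_i + f_i ⊠ e_{α_i}`. -/
noncomputable def psim (a b c d : R) (f : I → (VV M R →ₗ[R] R)) (i : I) :
    VV M R →ₗ[R] VV M R :=
  phi M R a b c d i + (f i).smulRight (ev M R (simplePos M i))

/-- LK-families. -/
structure IsLK (a b c d : R) (f : I → (VV M R →ₗ[R] R)) : Prop where
  diag : ∀ i j, i ≠ j → f i (ev M R (simplePos M j)) = 0
  rel2 : ∀ i j, M.m i j = 2 → (f i).comp (phi M R a b c d j) = d • f i
  rel3 : ∀ i j, M.m i j = 3 →
    (f i).comp (phi M R a b c d j) = (f j).comp (phi M R a b c d i)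

/-- The `R`-module `𝓕` of LK-families. -/
noncomputable def LKFamilies (a b c d : R) : Submodule R (I → (VV M R →ₗ[R] R)) where
  carrier := {f | IsLK M R a b c d f}
  add_mem' := by
    rintro f g ⟨hf1, hf2, hf3⟩ ⟨hg1, hg2, hg3⟩
    refine ⟨fun i j hij => ?_, fun i j hij => ?_, fun i j hij => ?_⟩
    · rw [Pi.add_apply, LinearMap.add_apply, hf1 i j hij, hg1 i j hij, add_zero]
    · simp only [Pi.add_apply, LinearMap.add_comp, hf2 i j hij, hg2 i j hij, smul_add]
    · simp only [Pi.add_apply, LinearMap.add_comp, hf3 i j hij, hg3 i j hij]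
  zero_mem' := by
    refine ⟨fun i j hij => ?_, fun i j hij => ?_, fun i j hij => ?_⟩
    · rw [Pi.zero_apply, LinearMap.zero_apply]
    · simp only [Pi.zero_apply, LinearMap.zero_comp, smul_zero]
    · simp only [Pi.zero_apply, LinearMap.zero_comp]
  smul_mem' := by
    rintro r f ⟨h1, h2, h3⟩
    refine ⟨fun i j hij => ?_, fun i j hij => ?_, fun i j hij => ?_⟩
    · rw [Pi.smul_apply, LinearMap.smul_apply, h1 i j hij, smul_zero]
    · rw [Pi.smul_apply, LinearMap.smul_comp, h2 i j hij]; exact smul_comm r d (f i)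
    · simp only [Pi.smul_apply, LinearMap.smul_comp, h3 i j hij]

end Roots

/-! ### The monoid of binary relations -/

/-- The monoid of binary relations on a set `Ω`, where `β (R * S) α ↔ ∃ γ, β R γ ∧ γ S α`. -/
def Bin (Ω : Type) := Ω → Ω → Prop

instance (Ω : Type) : Monoid (Bin Ω) where
  mul T S := fun x z => ∃ y, T x y ∧ S y z
  one := fun x y => x = y
  mul_assoc T S U := by
    funext x z
    apply propext
    constructor
    · rintro ⟨y, ⟨u, hTu, hSu⟩, hU⟩; exact ⟨u, hTu, y, hSu, hU⟩
    · rintro ⟨u, hT, y, hS, hU⟩; exact ⟨y, ⟨u, hT, hS⟩, hU⟩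
  one_mul T := by
    funext x z
    apply propext
    constructor
    · rintro ⟨y, rfl, h⟩; exact h
    · intro h; exact ⟨x, rfl, h⟩
  mul_one T := by
    funext x z
    apply propext
    constructor
    · rintro ⟨y, h, rfl⟩; exact h
    · intro h; exact ⟨z, h, rfl⟩

/-- `R(Ψ) = {β ∈ Ω ∣ ∃ α ∈ Ψ, β R α}`. -/
def Bin.image {Ω : Type} (T : Bin Ω) (Ψ : Set Ω) : Set Ω := {x | ∃ y ∈ Ψ, T x y}

/-! ### Further constructions -/

section More

variable [Fintype I] [DecidableEq I]

/-- The map `μ : 𝓕 → 𝔯` in the spherical case. -/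
noncomputable def muSph (M : CoxM I) (R : Type) [CommRing R] (a b c d : R) (i0 : I) :
    LKFamilies M R a b c d →ₗ[R] R where
  toFun f := f.1 i0 (ev M R (simplePos M i0))
  map_add' f g := rfl
  map_smul' r f := rfl

/-- A graph automorphism of a Coxeter matrix. -/
def IsAut (M : CoxM I) (g : Equiv.Perm I) : Prop := ∀ i j, M.m (g i) (g j) = M.m i j

/-- The action of a permutation of `I` on `E = ⊕ ℝ α_i`, sending `α_i` to `α_{g(i)}`. -/
def permE (g : Equiv.Perm I) (v : I → ℝ) : I → ℝ := fun i => v (g.symm i)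

open scoped Classical in
/-- The element of `Φ⁺` with given coordinates (junk value if the vector is not
a positive root). -/
noncomputable def posOf (M : CoxM I) [Nonempty I] (v : I → ℝ) : Pos M :=
  if h : IsPos M v then ⟨v, h⟩ else simplePos M (Classical.arbitrary I)

/-- The action of a permutation of `I` on `Φ⁺`. -/
noncomputable def permPos (M : CoxM I) [Nonempty I] (g : Equiv.Perm I) (α : Pos M) : Pos M :=
  posOf M (permE g α.1)

/-- The action of a permutation of `I` on `V`, permuting the basis `(e_α)`. -/
noncomputable def permV (M : CoxM I) (R : Type) [CommRing R] [Nonempty I] (g : Equiv.Perm I) :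
    VV M R →ₗ[R] VV M R :=
  Finsupp.lmapDomain R R (permPos M g)

/-- The submodule `V^G` of fixed points of `V` under a group `G` of permutations of `I`. -/
noncomputable def fixedV (M : CoxM I) (R : Type) [CommRing R] [Nonempty I]
    (G : Subgroup (Equiv.Perm I)) : Submodule R (VV M R) where
  carrier := {v | ∀ g ∈ G, permV M R g v = v}
  add_mem' hx hy g hg := by rw [map_add, hx g hg, hy g hg]
  zero_mem' g hg := map_zero _
  smul_mem' r v hv g hg := by rw [map_smul, hv g hg]

/-- The submonoid `(B⁺)^G` of fixed points of the Artin–Tits monoid under a group `G`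
of permutations of `I` (acting via `actB`). -/
def fixedB (M : CoxM I) (actB : Equiv.Perm I → (AM M →* AM M))
    (G : Subgroup (Equiv.Perm I)) : Submonoid (AM M) where
  carrier := {x | ∀ g ∈ G, actB g x = x}
  one_mem' g hg := map_one _
  mul_mem' hx hy g hg := by rw [map_mul, hx g hg, hy g hg]

/-- The map `μ : 𝓕 → 𝔯^ℕ` in the affine case, defined from the data of the imaginary
root `δ` and of a pair `(i0, j0)` with `m i0 j0 = 3`. -/
noncomputable def muAff (M : CoxM I) (R : Type) [CommRing R] [Nonempty I] (b c d : R)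
    (δ : I → ℝ) (i0 j0 : I) (f : I → (VV M R →ₗ[R] R)) : ℕ → R := fun n =>
  if n % 2 = 0 then f i0 (ev M R (posOf M ((n / 2 : ℕ) • δ + sroot i0)))
  else
    c * d * f i0 (ev M R (posOf M (((n + 1) / 2 : ℕ) • δ - sroot i0)))
      - b * c * f i0 (ev M R (posOf M (((n + 1) / 2 : ℕ) • δ - sroot i0 - sroot j0)))
      - d * d * f j0 (ev M R (posOf M (((n + 1) / 2 : ℕ) • δ - sroot i0 - sroot j0)))

end More

end LK

/-!
Push all matrix coefficients of `ψ` (in the basis `(e_α)`) forward to `𝔯₀`. There the `ψ_i` become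
nonnegative matrices, since the `f_i`-part vanishes and `φ_i` only involves `𝔞, 𝔟, 𝔠, 𝔡`; moreover
the row `α_i` of `ψ_i` is zero. So the row `α_i` of `ψ(x)` vanishes whenever `s_i ≼ x`. Conversely,
if it vanishes for `x = s_j t` with `j ≠ i`, positivity of the coefficients `𝔡` (when `m_{ij} = 2`),
resp. `𝔞`, `𝔟` and then `𝔠` (when `m_{ij} = 3`, through the root `α_i + α_j`) forces rows of `ψ(t)`
to vanish, and induction on the length together with a braid relation gives `s_i ≼ x`. Thus
`ψ(x) = ψ(y)` forces `x` and `y` to have the same left divisors `s_i`, and left cancellation in the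
image of `ψ` gives injectivity by induction on the length.
-/

namespace Finsupp

section MappedEntry

variable {ι R S : Type*} [Semiring R] [Semiring S] (pr : R →+* S)

theorem apply_eq_sum_mul_apply_single (T : Module.End R (ι →₀ R)) (v : ι →₀ R) (β : ι) :
    T v β = v.sum fun γ r => r * T (single γ 1) β := by
  conv_lhs => rw [← v.sum_single, map_finsuppSum, Finsupp.sum_apply]
  refine Finsupp.sum_congr fun γ _ => ?_
  rw [← smul_single_one, map_smul, smul_apply, smul_eq_mul]

/-- The coefficient in row `β` and column `α` of the matrix of `T`, pushed forward along `pr`. -/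
noncomputable def mappedEntry (T : Module.End R (ι →₀ R)) (β α : ι) : S := pr (T (single α 1) β)

theorem mappedEntry_mul (T U : Module.End R (ι →₀ R)) (β α : ι) :
    mappedEntry pr (T * U) β α =
      ∑ γ ∈ (U (single α 1)).support, mappedEntry pr U γ α * mappedEntry pr T β γ := by
  rw [mappedEntry, Module.End.mul_apply, apply_eq_sum_mul_apply_single, Finsupp.sum, map_sum]
  simp only [map_mul, mappedEntry]

theorem mappedEntry_one [DecidableEq ι] (β α : ι) :
    mappedEntry pr (1 : Module.End R (ι →₀ R)) β α = if α = β then 1 else 0 := by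
  simp [mappedEntry, single_apply, apply_ite pr]

def RowMapsToZero (T : Module.End R (ι →₀ R)) (β : ι) : Prop := ∀ α, mappedEntry pr T β α = 0

variable {pr} in
theorem RowMapsToZero.mul_right {T : Module.End R (ι →₀ R)} {β : ι} (h : RowMapsToZero pr T β)
    (U : Module.End R (ι →₀ R)) : RowMapsToZero pr (T * U) β := fun α => by
  rw [mappedEntry_mul]
  exact Finset.sum_eq_zero fun γ _ => by rw [h γ, mul_zero]

variable [PartialOrder S] [IsStrictOrderedRing S]

def nonnegMappedEntries : Submonoid (Module.End R (ι →₀ R)) where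
  carrier := {T | ∀ β α, 0 ≤ mappedEntry pr T β α}
  one_mem' β α := by classical rw [mappedEntry_one]; split_ifs <;> norm_num
  mul_mem' {T U} hT hU β α := by
    rw [mappedEntry_mul]
    exact Finset.sum_nonneg fun γ _ => mul_nonneg (hU γ α) (hT β γ)

variable {pr}

theorem RowMapsToZero.of_mul {T U : Module.End R (ι →₀ R)} (hT : T ∈ nonnegMappedEntries pr)
    (hU : U ∈ nonnegMappedEntries pr) {β γ : ι} (h : RowMapsToZero pr (T * U) β)
    (hpos : 0 < mappedEntry pr T β γ) : RowMapsToZero pr U γ := fun α => by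
  have hle : mappedEntry pr U γ α * mappedEntry pr T β γ ≤ 0 := by
    rw [← h α, mappedEntry_mul]
    by_cases hγ : γ ∈ (U (single α 1)).support
    · exact Finset.single_le_sum (fun x _ => mul_nonneg (hU x α) (hT β x)) hγ
    · rw [mappedEntry, notMem_support_iff.1 hγ, map_zero, zero_mul]
      exact Finset.sum_nonneg fun x _ => mul_nonneg (hU x α) (hT β x)
  by_contra hne
  exact (mul_pos (lt_of_le_of_ne (hU γ α) (Ne.symm hne)) hpos).not_ge hle

end MappedEntry

end Finsupp

namespace LK

open Finsupp (mappedEntry nonnegMappedEntries RowMapsToZero)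

section ArtinMonoid

variable {I : Type} (M : CoxM I)

theorem closure_range_gen : Submonoid.closure (Set.range (gen M)) = ⊤ :=
  PresentedMonoid.closure_range_of (artinRel M)

theorem eq_one_or_exists_eq_gen_mul (x : AM M) : x = 1 ∨ ∃ j t, x = gen M j * t := by
  have hx : x ∈ Submonoid.closure (Set.range (gen M)) := closure_range_gen M ▸ trivial
  induction hx using Submonoid.closure_induction_left with
  | one => exact .inl rfl
  | mul_left _ hj t _ _ => obtain ⟨j, rfl⟩ := hj; exact .inr ⟨j, t, rfl⟩

theorem mk'_braidWord_eq (i j : I) (h : M.m i j ≠ 0) :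
    (artinCon M).mk' (braidWord (M.m i j) i j) = (artinCon M).mk' (braidWord (M.m i j) j i) :=
  (artinCon M).eq.2 (ConGen.Rel.of _ _ ⟨i, j, h, rfl, rfl⟩)

theorem gen_mul_comm_of_m_eq_two {i j : I} (h : M.m i j = 2) :
    gen M i * gen M j = gen M j * gen M i := by
  have := mk'_braidWord_eq M i j (by omega)
  rwa [h] at this

theorem gen_braid_of_m_eq_three {i j : I} (h : M.m i j = 3) :
    gen M i * gen M j * gen M i = gen M j * gen M i * gen M j := by
  have := mk'_braidWord_eq M i j (by omega)
  rwa [h] at this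

-- Well defined because the braid relations are homogeneous.
def lengthHom : AM M →* Multiplicative ℕ :=
  Con.lift _ (FreeMonoid.lift fun _ => Multiplicative.ofAdd 1) <| Con.conGen_le.2 <| by
    rintro _ _ ⟨i, j, -, rfl, rfl⟩
    simp [braidWord, braidList, FreeMonoid.lift_ofList, Function.comp_def]

def length (x : AM M) : ℕ := Multiplicative.toAdd (lengthHom M x)

theorem length_mul (x y : AM M) : length M (x * y) = length M x + length M y := by
  simp [length]

theorem length_gen (i : I) : length M (gen M i) = 1 := rfl

theorem length_one : length M 1 = 0 := rfl

theorem not_gen_dvd_one (i : I) : ¬gen M i ∣ 1 := fun ⟨y, hy⟩ => by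
  have := congrArg (length M) hy
  rw [length_mul, length_gen, length_one] at this
  omega

theorem induction_on_length {P : AM M → Prop} (one : P 1)
    (gen_mul : ∀ j t, (∀ y, length M y ≤ length M t → P y) → P (gen M j * t)) (x : AM M) :
    P x := by
  induction hn : length M x using Nat.strong_induction_on generalizing x with
  | _ n ih =>
    obtain rfl | ⟨j, t, rfl⟩ := eq_one_or_exists_eq_gen_mul M x
    · exact one
    · refine gen_mul j t fun y hy => ih _ ?_ y rfl
      rw [← hn, length_mul, length_gen]; omega

end ArtinMonoid

section RootSystem

variable {I : Type} (M : CoxM I)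

theorem cf_self (i : I) : cf M i i = 2 := by
  simp [cf, (M.one_iff i i).2 rfl]

theorem cf_of_m_eq_two {i j : I} (h : M.m i j = 2) : cf M i j = 0 := by
  simp [cf, h]

theorem cf_of_m_eq_three {i j : I} (h : M.m i j = 3) : cf M i j = -1 := by
  simp [cf, h, Real.cos_pi_div_three]

theorem cf_nonpos (hsmall : M.Small) {i k : I} (h : i ≠ k) : cf M i k ≤ 0 := by
  rcases hsmall i k with h1 | h2 | h3
  · exact absurd ((M.one_iff i k).1 h1) h
  · rw [cf_of_m_eq_two M h2]
  · rw [cf_of_m_eq_three M h3]; norm_num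

theorem ne_of_m_eq_three {i j : I} (h : M.m i j = 3) : i ≠ j := fun hij => by
  simp [(M.one_iff i j).2 hij] at h

theorem bform_add_left [Fintype I] (x y z : I → ℝ) :
    bform M (x + y) z = bform M x z + bform M y z := by
  simp [bform, add_mul, Finset.sum_add_distrib]

theorem bform_smul_left [Fintype I] (r : ℝ) (x z : I → ℝ) :
    bform M (r • x) z = r * bform M x z := by
  simp [bform, Finset.mul_sum, mul_assoc]

variable [DecidableEq I]

theorem sroot_apply (i k : I) : sroot i k = if k = i then 1 else 0 := Pi.single_apply i 1 k

theorem sroot_injective : Function.Injective (sroot (I := I)) := fun i j h => by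
  simpa [sroot_apply, eq_comm] using congrFun h i

theorem sroot_add_ne_sroot_left {i j : I} : sroot i + sroot j ≠ sroot i := by
  rw [Ne, add_eq_left]
  exact fun e => by simpa [sroot_apply] using congrFun e j

variable [Fintype I]

theorem bform_sroot (v : I → ℝ) (k : I) : bform M v (sroot k) = ∑ i, v i * cf M i k := by
  simp [bform, sroot_apply]

theorem bform_sroot_sroot (j k : I) : bform M (sroot j) (sroot k) = cf M j k := by
  simp [bform_sroot, sroot_apply]

theorem srefl_sroot_self (i : I) : srefl M i (sroot i) = -sroot i := by
  rw [srefl, bform_sroot_sroot, cf_self]; module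

theorem srefl_srefl (i : I) (v : I → ℝ) : srefl M i (srefl M i v) = v := by
  have : bform M (srefl M i v) (sroot i) = -bform M v (sroot i) := by
    rw [srefl, sub_eq_add_neg, ← neg_smul, bform_add_left, bform_smul_left, bform_sroot_sroot,
      cf_self]
    ring
  rw [srefl, this, srefl]; module

theorem srefl_sroot_of_m_eq_two {i j : I} (h : M.m i j = 2) :
    srefl M j (sroot i) = sroot i := by
  rw [srefl, bform_sroot_sroot, cf_of_m_eq_two M h]; module

theorem srefl_sroot_of_m_eq_three {i j : I} (h : M.m i j = 3) :
    srefl M j (sroot i) = sroot i + sroot j := by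
  rw [srefl, bform_sroot_sroot, cf_of_m_eq_three M h]; module

theorem isPos_sroot_add {i j : I} (h : M.m i j = 3) : IsPos M (sroot i + sroot j) := by
  refine ⟨srefl_sroot_of_m_eq_three M h ▸ IsRoot.srefl j _ (IsRoot.simple i), fun k => ?_⟩
  simp only [Pi.add_apply, sroot_apply]
  split_ifs <;> norm_num

def sumPos {i j : I} (h : M.m i j = 3) : Pos M := ⟨sroot i + sroot j, isPos_sroot_add M h⟩

theorem sumPos_comm {i j : I} (h : M.m i j = 3) (h' : M.m j i = 3) : sumPos M h' = sumPos M h :=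
  Subtype.ext (add_comm _ _)

theorem simplePos_ne_sumPos {i j : I} (h : M.m i j = 3) : simplePos M i ≠ sumPos M h :=
  fun e => sroot_add_ne_sroot_left (congrArg Subtype.val e).symm

theorem srefl_sroot_add_left {i j : I} (h : M.m i j = 3) :
    srefl M i (sroot i + sroot j) = sroot j := by
  rw [srefl, bform_add_left, bform_sroot_sroot, bform_sroot_sroot, cf_self,
    cf_of_m_eq_three M (M.symm i j ▸ h)]
  module

theorem srefl_sroot_add_right {i j : I} (h : M.m i j = 3) :
    srefl M j (sroot i + sroot j) = sroot i := by
  rw [add_comm, srefl_sroot_add_left M (M.symm i j ▸ h)]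

theorem srefl_sroot_add_apply_nonneg (hsmall : M.Small) {i j : I} (h : M.m i j = 3) (k l : I) :
    0 ≤ srefl M k (sroot i + sroot j) l := by
  by_cases hki : k = i
  · rw [hki, srefl_sroot_add_left M h]; exact (isPos_sroot M j).2 l
  by_cases hkj : k = j
  · rw [hkj, srefl_sroot_add_right M h]; exact (isPos_sroot M i).2 l
  have hcoef : bform M (sroot i + sroot j) (sroot k) ≤ 0 := by
    rw [bform_add_left, bform_sroot_sroot, bform_sroot_sroot]
    linarith [cf_nonpos M hsmall (Ne.symm hki), cf_nonpos M hsmall (Ne.symm hkj)]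
  have hsk : 0 ≤ sroot k l := (isPos_sroot M k).2 l
  simp only [srefl, Pi.sub_apply, Pi.smul_apply, smul_eq_mul]
  nlinarith [(isPos_sroot_add M h).2 l]

theorem dep_le {v : I → ℝ} (l : List I) {k : I} (h : l.foldr (srefl M) v k < 0) :
    dep M v ≤ l.length :=
  Nat.sInf_le ⟨l, rfl, k, h⟩

theorem dep_sroot_le_one (i : I) : dep M (sroot i) ≤ 1 :=
  dep_le M [i] (k := i) (by simp [srefl_sroot_self, sroot_apply])

theorem two_le_dep_sroot_add (hsmall : M.Small) {i j : I} (h : M.m i j = 3) :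
    2 ≤ dep M (sroot i + sroot j) := by
  have hneg : [j, i].foldr (srefl M) (sroot i + sroot j) j < 0 := by
    simp [srefl_sroot_add_left M h, srefl_sroot_self, sroot_apply]
  refine le_csInf ⟨2, [j, i], rfl, j, hneg⟩ ?_
  rintro n ⟨l, rfl, k, hk⟩
  match l, hk with
  | [], hk => exact absurd hk (not_lt.2 ((isPos_sroot_add M h).2 k))
  | [a], hk => exact absurd hk (not_lt.2 (srefl_sroot_add_apply_nonneg M hsmall h a k))
  | _ :: _ :: _, _ => simp

end RootSystem

section Representation

variable {I : Type} [Fintype I] [DecidableEq I] {M : CoxM I} {R : Type} [CommRing R]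
  {a b c d : R}

theorem phi_ev (i : I) (α : Pos M) : phi M R a b c d i (ev M R α) = phiAux M R a b c d i α := by
  rw [phi, ev, Finsupp.lift_apply, Finsupp.sum_single_index (by rw [zero_smul]), one_smul]

theorem srefl_ne_sroot_self (i : I) (γ : Pos M) : srefl M i γ.1 ≠ sroot i := fun he => by
  have hγ : γ.1 = -sroot i := by rw [← srefl_srefl M i γ.1, he, srefl_sroot_self]
  have := γ.2.2 i
  simp [hγ, sroot_apply] at this
  linarith

theorem phi_ev_apply_simplePos_self (i : I) (γ : Pos M) :
    phi M R a b c d i (ev M R γ) (simplePos M i) = 0 := by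
  have hne (v : Pos M) (hv : v.1 ≠ sroot i) : ev M R v (simplePos M i) = 0 :=
    Finsupp.single_eq_of_ne fun e => hv (congrArg Subtype.val e).symm
  rw [phi_ev, phiAux]
  split_ifs with h1 _ h3
  · rfl
  · simp [hne γ h1]
  · simp [hne γ h1, hne ⟨_, h3⟩ (srefl_ne_sroot_self i γ)]
  · simp [hne ⟨_, h3⟩ (srefl_ne_sroot_self i γ)]
  · rfl

variable {i : I} {α : Pos M}

theorem phiAux_of_srefl_eq (h1 : α.1 ≠ sroot i) (h2 : srefl M i α.1 = α.1) :
    phiAux M R a b c d i α = d • ev M R α := by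
  rw [phiAux, if_neg h1, if_pos h2]

theorem phiAux_of_dep_lt (h1 : α.1 ≠ sroot i) (h2 : srefl M i α.1 ≠ α.1)
    (h3 : IsPos M (srefl M i α.1)) (h4 : dep M α.1 < dep M (srefl M i α.1)) :
    phiAux M R a b c d i α = a • ev M R α + c • ev M R ⟨_, h3⟩ := by
  rw [phiAux, if_neg h1, if_neg h2, dif_pos h3, if_pos h4]

theorem phiAux_of_not_dep_lt (h1 : α.1 ≠ sroot i) (h2 : srefl M i α.1 ≠ α.1)
    (h3 : IsPos M (srefl M i α.1)) (h4 : ¬dep M α.1 < dep M (srefl M i α.1)) :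
    phiAux M R a b c d i α = b • ev M R ⟨_, h3⟩ := by
  rw [phiAux, if_neg h1, if_neg h2, dif_pos h3, if_neg h4]

theorem phi_ev_simplePos_of_m_eq_two {i j : I} (h : M.m i j = 2) :
    phi M R a b c d j (ev M R (simplePos M i)) = d • ev M R (simplePos M i) := by
  have hij : i ≠ j := fun e => by simp [(M.one_iff i j).2 e] at h
  rw [phi_ev, phiAux_of_srefl_eq (fun e => hij (sroot_injective e))
    (srefl_sroot_of_m_eq_two M h)]

theorem phi_ev_simplePos_of_m_eq_three (hsmall : M.Small) {i j : I} (h : M.m i j = 3) :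
    phi M R a b c d j (ev M R (simplePos M i)) =
      a • ev M R (simplePos M i) + c • ev M R (sumPos M h) := by
  have hs : srefl M j (sroot i) = sroot i + sroot j := srefl_sroot_of_m_eq_three M h
  have hdep : dep M (sroot i) < dep M (srefl M j (sroot i)) := by
    rw [hs]; linarith [dep_sroot_le_one M i, two_le_dep_sroot_add M hsmall h]
  rw [phi_ev, phiAux_of_dep_lt (fun e => ne_of_m_eq_three M h (sroot_injective e))
    (hs ▸ sroot_add_ne_sroot_left) (hs ▸ isPos_sroot_add M h) hdep]
  congr 3
  exact Subtype.ext hs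

theorem phi_ev_sumPos (hsmall : M.Small) {i j : I} (h : M.m i j = 3) :
    phi M R a b c d j (ev M R (sumPos M h)) = b • ev M R (simplePos M i) := by
  have hs : srefl M j (sroot i + sroot j) = sroot i := srefl_sroot_add_right M h
  have hdep : ¬dep M (sroot i + sroot j) < dep M (srefl M j (sroot i + sroot j)) := by
    rw [hs]; linarith [dep_sroot_le_one M i, two_le_dep_sroot_add M hsmall h]
  have hj : sroot i + sroot j ≠ sroot j := by
    simpa [add_comm] using sroot_add_ne_sroot_left (i := j) (j := i)
  rw [phi_ev, phiAux_of_not_dep_lt hj (hs ▸ sroot_add_ne_sroot_left.symm)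
    (hs ▸ isPos_sroot M i) hdep]
  congr 3

end Representation

section Faithfulness

variable {I : Type} [Fintype I] [DecidableEq I] {M : CoxM I} {R : Type} [CommRing R]
  {S : Type*} [Semiring S] {pr : R →+* S}
  {a b c d : R} {f : I → (VV M R →ₗ[R] R)} {psi : AM M →* Module.End R (VV M R)}

theorem mappedEntry_psim (hzero : ∀ i α, pr (f i (ev M R α)) = 0) (i : I) (β α : Pos M) :
    mappedEntry pr (psim M R a b c d f i) β α = pr (phi M R a b c d i (ev M R α) β) := by
  change pr (psim M R a b c d f i (ev M R α) β) = _
  simp [psim, hzero]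

theorem rowMapsToZero_psim_simplePos (hzero : ∀ i α, pr (f i (ev M R α)) = 0) (i : I) :
    RowMapsToZero pr (psim M R a b c d f i) (simplePos M i) := fun α => by
  rw [mappedEntry_psim hzero, phi_ev_apply_simplePos_self, map_zero]

theorem rowMapsToZero_of_gen_dvd (hpsi : ∀ i, psi (gen M i) = psim M R a b c d f i)
    (hzero : ∀ i α, pr (f i (ev M R α)) = 0) {i : I} {x : AM M} (h : gen M i ∣ x) :
    RowMapsToZero pr (psi x) (simplePos M i) := by
  obtain ⟨y, rfl⟩ := h
  rw [map_mul, hpsi]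
  exact (rowMapsToZero_psim_simplePos hzero i).mul_right _

variable [PartialOrder S] {i j : I}

theorem mappedEntry_psim_pos_of_m_eq_two (hzero : ∀ i α, pr (f i (ev M R α)) = 0)
    (hd : 0 < pr d) (h : M.m i j = 2) :
    0 < mappedEntry pr (psim M R a b c d f j) (simplePos M i) (simplePos M i) := by
  rw [mappedEntry_psim hzero, phi_ev_simplePos_of_m_eq_two h]
  simpa [ev] using hd

theorem mappedEntry_psim_pos_of_m_eq_three (hzero : ∀ i α, pr (f i (ev M R α)) = 0)
    (hsmall : M.Small) (ha : 0 < pr a) (h : M.m i j = 3) :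
    0 < mappedEntry pr (psim M R a b c d f j) (simplePos M i) (simplePos M i) := by
  rw [mappedEntry_psim hzero, phi_ev_simplePos_of_m_eq_three hsmall h]
  simpa [ev, Finsupp.single_eq_of_ne (simplePos_ne_sumPos M h)] using ha

theorem mappedEntry_psim_sumPos_pos (hzero : ∀ i α, pr (f i (ev M R α)) = 0)
    (hsmall : M.Small) (hb : 0 < pr b) (h : M.m i j = 3) :
    0 < mappedEntry pr (psim M R a b c d f j) (simplePos M i) (sumPos M h) := by
  rw [mappedEntry_psim hzero, phi_ev_sumPos hsmall h]
  simpa [ev] using hb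

theorem mappedEntry_psim_sumPos_simplePos_pos (hzero : ∀ i α, pr (f i (ev M R α)) = 0)
    (hsmall : M.Small) (hc : 0 < pr c) (h : M.m i j = 3) :
    0 < mappedEntry pr (psim M R a b c d f i) (sumPos M h) (simplePos M j) := by
  have h' : M.m j i = 3 := M.symm i j ▸ h
  have hne : sumPos M h ≠ simplePos M j := (sumPos_comm M h h' ▸ simplePos_ne_sumPos M h').symm
  rw [mappedEntry_psim hzero, phi_ev_simplePos_of_m_eq_three hsmall h', sumPos_comm M h h']
  simpa [ev, Finsupp.single_eq_of_ne hne] using hc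

variable [IsStrictOrderedRing S]

theorem psim_mem_nonnegMappedEntries (hzero : ∀ i α, pr (f i (ev M R α)) = 0)
    (ha : 0 ≤ pr a) (hb : 0 ≤ pr b) (hc : 0 ≤ pr c) (hd : 0 ≤ pr d) (i : I) :
    psim M R a b c d f i ∈ nonnegMappedEntries pr := fun β α => by
  have hterm {x : R} (γ : Pos M) (hx : 0 ≤ pr x) : 0 ≤ pr ((x • ev M R γ) β) := by
    classical
    rw [Finsupp.smul_apply, smul_eq_mul, ev, Finsupp.single_apply, map_mul]
    split_ifs <;> simp [hx]
  rw [mappedEntry_psim hzero, phi_ev, phiAux]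
  split_ifs
  · simp
  · exact hterm α hd
  · rw [Finsupp.add_apply, map_add]; exact add_nonneg (hterm _ ha) (hterm _ hc)
  · exact hterm _ hb
  · simp

theorem psi_mem_nonnegMappedEntries (hpsi : ∀ i, psi (gen M i) = psim M R a b c d f i)
    (hzero : ∀ i α, pr (f i (ev M R α)) = 0)
    (ha : 0 ≤ pr a) (hb : 0 ≤ pr b) (hc : 0 ≤ pr c) (hd : 0 ≤ pr d) (x : AM M) :
    psi x ∈ nonnegMappedEntries pr := by
  have : Submonoid.closure (Set.range (gen M)) ≤ (nonnegMappedEntries pr).comap psi :=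
    Submonoid.closure_le.2 <| Set.range_subset_iff.2 fun i => by
      simpa [hpsi] using psim_mem_nonnegMappedEntries hzero ha hb hc hd i
  exact this (closure_range_gen M ▸ Submonoid.mem_top x)

theorem gen_dvd_of_rowMapsToZero (hsmall : M.Small)
    (hpsi : ∀ i, psi (gen M i) = psim M R a b c d f i) (hzero : ∀ i α, pr (f i (ev M R α)) = 0)
    (ha : 0 < pr a) (hb : 0 < pr b) (hc : 0 < pr c) (hd : 0 < pr d) (x : AM M) :
    ∀ i, RowMapsToZero pr (psi x) (simplePos M i) → gen M i ∣ x := by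
  have hpsim := psim_mem_nonnegMappedEntries (a := a) (b := b) (c := c) (d := d) hzero
    ha.le hb.le hc.le hd.le
  have hpsi' := psi_mem_nonnegMappedEntries hpsi hzero ha.le hb.le hc.le hd.le
  induction x using induction_on_length with
  | one =>
    intro i hrow
    simpa [mappedEntry, ev] using hrow (simplePos M i)
  | gen_mul j t ih =>
    intro i hrow
    by_cases hji : j = i
    · exact hji ▸ dvd_mul_right _ _
    rw [map_mul, hpsi] at hrow
    rcases hsmall i j with h1 | h2 | h3
    · exact absurd ((M.one_iff i j).1 h1) (Ne.symm hji)
    · obtain ⟨z, rfl⟩ := ih t le_rfl i <| hrow.of_mul (hpsim j) (hpsi' t) <|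
        mappedEntry_psim_pos_of_m_eq_two hzero hd h2
      exact ⟨gen M j * z, by rw [← mul_assoc, ← gen_mul_comm_of_m_eq_two M h2, mul_assoc]⟩
    · obtain ⟨y, rfl⟩ := ih t le_rfl i <| hrow.of_mul (hpsim j) (hpsi' t) <|
        mappedEntry_psim_pos_of_m_eq_three hzero hsmall ha h3
      have hrow' := hrow.of_mul (hpsim j) (hpsi' _) <|
        mappedEntry_psim_sumPos_pos hzero hsmall hb h3
      rw [map_mul, hpsi] at hrow'
      obtain ⟨z, rfl⟩ := ih y (by rw [length_mul, length_gen]; omega) j <|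
        hrow'.of_mul (hpsim i) (hpsi' y) <| mappedEntry_psim_sumPos_simplePos_pos hzero hsmall hc h3
      refine ⟨gen M j * gen M i * z, ?_⟩
      simp only [← mul_assoc, gen_braid_of_m_eq_three M (M.symm i j ▸ h3)]

theorem gen_dvd_of_psi_eq (hsmall : M.Small)
    (hpsi : ∀ i, psi (gen M i) = psim M R a b c d f i) (hzero : ∀ i α, pr (f i (ev M R α)) = 0)
    (ha : 0 < pr a) (hb : 0 < pr b) (hc : 0 < pr c) (hd : 0 < pr d) {x y : AM M}
    (hxy : psi x = psi y) {j : I} (hx : gen M j ∣ x) : gen M j ∣ y :=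
  gen_dvd_of_rowMapsToZero hsmall hpsi hzero ha hb hc hd y j <|
    hxy ▸ rowMapsToZero_of_gen_dvd hpsi hzero hx

end Faithfulness

end LK

open LK in
theorem statement_4_general {I : Type} [Fintype I] [DecidableEq I] (M : CoxM I) (hsmall : M.Small)
    (R : Type) [CommRing R] (b c d : R)
    (a : R)
    (f : I → (VV M R →ₗ[R] R))
    (psi : AM M →* Module.End R (VV M R))
    (hpsi : ∀ i : I, psi (gen M i) = psim M R a b c d f i)
    (hcanc : ∀ x y z : Module.End R (VV M R),
      x ∈ Set.range psi → y ∈ Set.range psi → z ∈ Set.range psi → x * y = x * z → y = z)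
    (R0 : Type) [CommRing R0] [LinearOrder R0] [IsStrictOrderedRing R0] (pr : R →+* R0)
    (hapos : 0 < pr a) (hbpos : 0 < pr b) (hcpos : 0 < pr c) (hdpos : 0 < pr d)
    (hzero : ∀ (i : I) (α : Pos M), pr (f i (ev M R α)) = 0) :
    Function.Injective psi := by
  have hdvd {x y : AM M} (hxy : psi x = psi y) {j : I} : gen M j ∣ x → gen M j ∣ y :=
    gen_dvd_of_psi_eq hsmall hpsi hzero hapos hbpos hcpos hdpos hxy
  intro x
  induction x using induction_on_length with
  | one =>
    intro y hy
    obtain rfl | ⟨j, t, rfl⟩ := eq_one_or_exists_eq_gen_mul M y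
    · rfl
    · exact absurd (hdvd hy.symm (dvd_mul_right _ t)) (not_gen_dvd_one M j)
  | gen_mul j t ih =>
    intro y hy
    obtain ⟨y', rfl⟩ := hdvd hy (dvd_mul_right _ t)
    rw [map_mul, map_mul] at hy
    rw [ih t le_rfl (hcanc _ _ _ ⟨_, rfl⟩ ⟨_, rfl⟩ ⟨_, rfl⟩ hy)]

open LK in
/-- faithfulness criterion for LK-representations. -/
theorem statement_4 {I : Type} [Fintype I] [DecidableEq I] (M : CoxM I) (hsmall : M.Small)
    (R : Type) [CommRing R] (b c d : R) (hb : IsUnit b) (hc : IsUnit c) (hd : IsUnit d)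
    (a : R) (ha : a = d - b * c * Ring.inverse d)
    (f : I → (VV M R →ₗ[R] R)) (hf : IsLK M R a b c d f)
    (psi : AM M →* Module.End R (VV M R))
    (hpsi : ∀ i : I, psi (gen M i) = psim M R a b c d f i)
    (hcanc : ∀ x y z : Module.End R (VV M R),
      x ∈ Set.range psi → y ∈ Set.range psi → z ∈ Set.range psi → x * y = x * z → y = z)
    (R0 : Type) [CommRing R0] [LinearOrder R0] [IsStrictOrderedRing R0] (pr : R →+* R0)
    (hapos : 0 < pr a) (hbpos : 0 < pr b) (hcpos : 0 < pr c) (hdpos : 0 < pr d)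
    (hzero : ∀ (i : I) (α : Pos M), pr (f i (ev M R α)) = 0) :
    Function.Injective psi :=
  statement_4_general M hsmall R b c d a f psi hpsi hcanc R0 pr hapos hbpos hcpos hdpos hzero
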